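/- Let $(a_n)$ be a convex, decreasing, positive sequence with $a_n \log n = O(1)$, and $f$ as in the standard construction with Fejér kernels so that $\hat f(n) = a_{|n|}$. Then the sequence $N \mapsto \int_{-1/2}^{1/2} |S_N(f,t)|\,dt$ is bounded. -/

import Mathlib

open Real Set Finset Filter Topology MeasureTheory

/-- The `j`th Fejér kernel. -/
noncomputable def fejer (j : ℕ) (t : ℝ) : ℝ :=
  ∑ n ∈ Finset.Icc (-(j : ℤ)) (j : ℤ),
    (1 - |(n : ℝ)| / (j + 1)) * Real.cos (2 * Real.pi * n * t)

/-!
Summation by parts writes `S_N = ∑_{n ≤ N} (a_n - a_{n+1}) D_n + a_{N+1} D_N` with `D_n` the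
Dirichlet kernels. By convexity the differences `a_n - a_{n+1}` decrease, so a second summation
by parts makes the first sum a nonnegative combination of the Fejér sums `∑_{m < K} D_m ≥ 0`;
its `L¹` norm is then its integral `a_0 - a_{N+1}`. The last term contributes at most
`a_{N+1} ‖D_N‖₁ ≤ a_{N+1} (1 + log (2N + 1))`, which is `O(1)` since `a_n log n = O(1)`.
-/

-- the `N`th symmetric partial sum of the Fourier series with coefficients `c |n|`
noncomputable def cosineSum (c : ℕ → ℝ) (N : ℕ) (t : ℝ) : ℝ :=
  c 0 + 2 * ∑ n ∈ Icc 1 N, c n * cos (2 * π * n * t)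

noncomputable def dirichlet (N : ℕ) (t : ℝ) : ℝ :=
  cosineSum 1 N t

theorem cosineSum_succ (c : ℕ → ℝ) (N : ℕ) (t : ℝ) :
    cosineSum c (N + 1) t = cosineSum c N t + 2 * c (N + 1) * cos (2 * π * (N + 1) * t) := by
  simp only [cosineSum, sum_Icc_succ_top (Nat.le_add_left 1 N)]
  push_cast
  ring

@[fun_prop]
theorem continuous_cosineSum (c : ℕ → ℝ) (N : ℕ) : Continuous (cosineSum c N) := by
  unfold cosineSum
  fun_prop

@[fun_prop]
theorem continuous_dirichlet (N : ℕ) : Continuous (dirichlet N) :=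
  continuous_cosineSum 1 N

theorem dirichlet_succ (N : ℕ) (t : ℝ) :
    dirichlet (N + 1) t = dirichlet N t + 2 * cos (2 * π * (N + 1) * t) := by
  simp [dirichlet, cosineSum_succ]

theorem cosineSum_eq_sum_sub_mul_dirichlet (c : ℕ → ℝ) (N : ℕ) (t : ℝ) :
    cosineSum c N t =
      ∑ n ∈ range (N + 1), (c n - c (n + 1)) * dirichlet n t + c (N + 1) * dirichlet N t := by
  induction N with
  | zero => simp [cosineSum, dirichlet]
  | succ N ih => rw [cosineSum_succ, ih, sum_range_succ _ (N + 1), dirichlet_succ]; ring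

theorem dirichlet_mul_sin (N : ℕ) (t : ℝ) :
    dirichlet N t * sin (π * t) = sin ((2 * N + 1) * (π * t)) := by
  induction N with
  | zero => simp [dirichlet, cosineSum]
  | succ N ih =>
    have h : 2 * cos (2 * π * (N + 1) * t) * sin (π * t) =
        sin ((2 * (N + 1) + 1) * (π * t)) - sin ((2 * N + 1) * (π * t)) := by
      rw [show (2 * ((N : ℝ) + 1) + 1) * (π * t) = 2 * π * (N + 1) * t + π * t by ring,
        show (2 * (N : ℝ) + 1) * (π * t) = 2 * π * (N + 1) * t - π * t by ring,
        sin_add, sin_sub]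
      ring
    rw [dirichlet_succ]
    push_cast
    linear_combination ih + h

theorem sum_range_dirichlet_mul_sin_sq (K : ℕ) (t : ℝ) :
    (∑ m ∈ range K, dirichlet m t) * sin (π * t) ^ 2 = sin (K * (π * t)) ^ 2 := by
  induction K with
  | zero => simp
  | succ K ih =>
    set x := π * t
    have h : sin ((K + 1) * x + K * x) * sin ((K + 1) * x - K * x) =
        sin ((K + 1) * x) ^ 2 - sin (K * x) ^ 2 := by
      rw [sin_add, sin_sub]
      linear_combination sin ((K + 1) * x) ^ 2 * sin_sq_add_cos_sq (K * x) -
        sin (K * x) ^ 2 * sin_sq_add_cos_sq ((K + 1) * x)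
    rw [show ((K : ℝ) + 1) * x + K * x = (2 * K + 1) * x by ring,
      show ((K : ℝ) + 1) * x - K * x = x by ring] at h
    rw [sum_range_succ, add_mul, ih]
    push_cast
    linear_combination sin x * dirichlet_mul_sin K t + h

theorem dirichlet_intCast (N : ℕ) (k : ℤ) : dirichlet N k = 2 * N + 1 := by
  have hcos : ∀ n : ℕ, cos (2 * π * n * k) = 1 := fun n => by
    simpa [mul_comm, mul_left_comm, mul_assoc] using cos_int_mul_two_pi (n * k)
  simp [dirichlet, cosineSum, hcos]
  ring

/-- `∑ m ∈ range K, dirichlet m` is `K` times the Fejér kernel `fejer (K - 1)`. -/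
theorem sum_range_dirichlet_nonneg (K : ℕ) (t : ℝ) :
    0 ≤ ∑ m ∈ range K, dirichlet m t := by
  by_cases hs : sin (π * t) = 0
  · obtain ⟨k, hk⟩ := sin_eq_zero_iff.1 hs
    obtain rfl : t = k := by nlinarith [pi_pos]
    simp only [dirichlet_intCast]
    positivity
  · refine nonneg_of_mul_nonneg_left ?_ (sq_pos_of_ne_zero hs)
    rw [sum_range_dirichlet_mul_sin_sq]
    positivity

theorem sum_range_mul_nonneg_of_antitone {R : Type*} [Ring R] [PartialOrder R] [IsOrderedRing R]
    {c g : ℕ → R} (hc : Antitone c) (hc0 : ∀ n, 0 ≤ c n)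
    (hg : ∀ K, 0 ≤ ∑ m ∈ range K, g m) (N : ℕ) : 0 ≤ ∑ n ∈ range N, c n * g n := by
  have := sum_range_by_parts c g N
  simp only [smul_eq_mul] at this
  rw [this, sub_nonneg]
  calc ∑ i ∈ range (N - 1), (c (i + 1) - c i) * ∑ m ∈ range (i + 1), g m
      ≤ 0 := sum_nonpos fun i _ =>
        mul_nonpos_of_nonpos_of_nonneg (sub_nonpos.2 (hc i.le_succ)) (hg _)
    _ ≤ c (N - 1) * ∑ m ∈ range N, g m := mul_nonneg (hc0 _) (hg N)

theorem dirichlet_neg (N : ℕ) (t : ℝ) : dirichlet N (-t) = dirichlet N t := by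
  simp [dirichlet, cosineSum, mul_neg, cos_neg]

theorem integral_cos_two_pi_mul_succ (n : ℕ) :
    ∫ t in -(1 / 2 : ℝ)..1 / 2, cos (2 * π * (n + 1) * t) = 0 := by
  have hc : 2 * π * ((n : ℝ) + 1) ≠ 0 := by positivity
  rw [intervalIntegral.integral_comp_mul_left cos hc, integral_cos,
    show 2 * π * ((n : ℝ) + 1) * (1 / 2) = ((n + 1 : ℕ) : ℝ) * π by push_cast; ring,
    show 2 * π * ((n : ℝ) + 1) * -(1 / 2) = -(((n + 1 : ℕ) : ℝ) * π) by push_cast; ring,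
    sin_neg, sin_nat_mul_pi]
  simp

theorem integral_dirichlet (N : ℕ) : ∫ t in -(1 / 2 : ℝ)..1 / 2, dirichlet N t = 1 := by
  induction N with
  | zero => norm_num [dirichlet, cosineSum]
  | succ N ih =>
    simp_rw [dirichlet_succ]
    rw [intervalIntegral.integral_add ((continuous_dirichlet N).intervalIntegrable _ _)
      ((by fun_prop : Continuous fun t => 2 * cos (2 * π * (N + 1) * t)).intervalIntegrable _ _),
      intervalIntegral.integral_const_mul, ih, integral_cos_two_pi_mul_succ]
    norm_num

theorem abs_dirichlet_le (N : ℕ) (t : ℝ) : |dirichlet N t| ≤ 2 * N + 1 := by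
  induction N with
  | zero => simp [dirichlet, cosineSum]
  | succ N ih =>
    rw [dirichlet_succ]
    push_cast
    have := abs_cos_le_one (2 * π * (N + 1) * t)
    calc |dirichlet N t + 2 * cos (2 * π * (N + 1) * t)|
        ≤ |dirichlet N t| + 2 * |cos (2 * π * (N + 1) * t)| := by
          simpa [abs_mul] using abs_add_le (dirichlet N t) (2 * cos (2 * π * (N + 1) * t))
      _ ≤ 2 * (N + 1) + 1 := by linarith

theorem abs_dirichlet_le_one_div (N : ℕ) {t : ℝ} (ht : 0 < t) (ht' : t ≤ 1 / 2) :
    |dirichlet N t| ≤ 1 / (2 * t) := by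
  have hjordan : 2 * t ≤ sin (π * t) := by
    convert mul_le_sin (by positivity : 0 ≤ π * t) (by nlinarith [pi_pos]) using 1
    field_simp
  rw [le_div_iff₀ (by positivity)]
  calc |dirichlet N t| * (2 * t) ≤ |dirichlet N t| * sin (π * t) := by gcongr
    _ = |sin ((2 * N + 1) * (π * t))| := by
      rw [← dirichlet_mul_sin, abs_mul, abs_of_nonneg (by linarith : 0 ≤ sin (π * t))]
    _ ≤ 1 := abs_sin_le_one _

theorem integral_abs_dirichlet_zero_half_le (N : ℕ) :
    ∫ t in (0 : ℝ)..1 / 2, |dirichlet N t| ≤ (1 + log (2 * N + 1)) / 2 := by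
  -- where the bounds `2N + 1` and `1 / (2t)` on `|dirichlet N t|` cross
  set δ : ℝ := 1 / (2 * (2 * N + 1))
  have hδ : 0 < δ := by positivity
  have hδ' : δ ≤ 1 / 2 := by
    rw [div_le_div_iff₀ (by positivity) two_pos]
    linarith [(N.cast_nonneg : (0 : ℝ) ≤ N)]
  have hint (u v : ℝ) : IntervalIntegrable (fun t => |dirichlet N t|) volume u v :=
    (continuous_dirichlet N).abs.intervalIntegrable u v
  have hnear : ∫ t in (0 : ℝ)..δ, |dirichlet N t| ≤ 1 / 2 :=
    calc ∫ t in (0 : ℝ)..δ, |dirichlet N t| ≤ ∫ _ in (0 : ℝ)..δ, (2 * N + 1 : ℝ) :=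
          intervalIntegral.integral_mono_on hδ.le (hint _ _) intervalIntegrable_const
            fun t _ => abs_dirichlet_le N t
      _ = 1 / 2 := by
          simp only [intervalIntegral.integral_const, smul_eq_mul, sub_zero, δ]
          field_simp
  have hfar : ∫ t in δ..1 / 2, |dirichlet N t| ≤ log (2 * N + 1) / 2 := by
    have hinv : IntervalIntegrable (fun t : ℝ => 2⁻¹ * t⁻¹) volume δ (1 / 2) :=
      (intervalIntegral.intervalIntegrable_inv
        (fun t ht => ((lt_min hδ (by norm_num)).trans_le ht.1).ne') continuousOn_id).const_mul _
    calc ∫ t in δ..1 / 2, |dirichlet N t| ≤ ∫ t in δ..1 / 2, 2⁻¹ * t⁻¹ :=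
          intervalIntegral.integral_mono_on hδ' (hint _ _) hinv fun t ht => by
            simpa [mul_inv, mul_comm] using abs_dirichlet_le_one_div N (hδ.trans_le ht.1) ht.2
      _ = log (2 * N + 1) / 2 := by
          rw [intervalIntegral.integral_const_mul, integral_inv_of_pos hδ one_half_pos]
          simp only [δ]
          field_simp
  rw [← intervalIntegral.integral_add_adjacent_intervals (hint 0 δ) (hint δ (1 / 2))]
  linarith

theorem integral_abs_dirichlet_le (N : ℕ) :
    ∫ t in -(1 / 2 : ℝ)..1 / 2, |dirichlet N t| ≤ 1 + log (2 * N + 1) := by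
  have hint (u v : ℝ) : IntervalIntegrable (fun t => |dirichlet N t|) volume u v :=
    (continuous_dirichlet N).abs.intervalIntegrable u v
  have heven :
      ∫ t in -(1 / 2 : ℝ)..0, |dirichlet N t| = ∫ t in (0 : ℝ)..1 / 2, |dirichlet N t| := by
    simpa [dirichlet_neg] using
      (intervalIntegral.integral_comp_neg (a := 0) (b := 1 / 2) fun t => |dirichlet N t|).symm
  rw [← intervalIntegral.integral_add_adjacent_intervals (hint _ 0) (hint 0 _), heven]
  linarith [integral_abs_dirichlet_zero_half_le N]

theorem integral_abs_cosineSum_le {c : ℕ → ℝ}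
    (hconv : ∀ n, 0 ≤ c n - 2 * c (n + 1) + c (n + 2))
    (hc : Antitone c) (hc0 : ∀ n, 0 ≤ c n) (N : ℕ) :
    ∫ t in -(1 / 2 : ℝ)..1 / 2, |cosineSum c N t| ≤ c 0 + c (N + 1) * log (2 * N + 1) := by
  have hii {g : ℝ → ℝ} (hg : Continuous g) : IntervalIntegrable g volume (-(1 / 2)) (1 / 2) :=
    hg.intervalIntegrable _ _
  let P : ℝ → ℝ := fun t => ∑ n ∈ range (N + 1), (c n - c (n + 1)) * dirichlet n t
  have hP_nonneg (t : ℝ) : 0 ≤ P t :=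
    sum_range_mul_nonneg_of_antitone (antitone_nat_of_succ_le fun n => by linarith [hconv n])
      (fun n => sub_nonneg.2 (hc n.le_succ)) (fun K => sum_range_dirichlet_nonneg K t) _
  have hP_integral : ∫ t in -(1 / 2 : ℝ)..1 / 2, P t = c 0 - c (N + 1) := by
    rw [intervalIntegral.integral_finsetSum fun n _ => hii (by fun_prop)]
    simp only [intervalIntegral.integral_const_mul, integral_dirichlet, mul_one]
    exact sum_range_sub' c _
  have hle (t : ℝ) : |cosineSum c N t| ≤ P t + c (N + 1) * |dirichlet N t| := by
    calc |cosineSum c N t| = |P t + c (N + 1) * dirichlet N t| := by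
          rw [cosineSum_eq_sum_sub_mul_dirichlet]
      _ ≤ |P t| + |c (N + 1) * dirichlet N t| := abs_add_le _ _
      _ = P t + c (N + 1) * |dirichlet N t| := by
          rw [abs_of_nonneg (hP_nonneg t), abs_mul, abs_of_nonneg (hc0 _)]
  calc ∫ t in -(1 / 2 : ℝ)..1 / 2, |cosineSum c N t|
      ≤ ∫ t in -(1 / 2 : ℝ)..1 / 2, P t + c (N + 1) * |dirichlet N t| :=
        intervalIntegral.integral_mono_on (by norm_num) (hii (by fun_prop)) (hii (by fun_prop))
          fun t _ => hle t
    _ = c 0 - c (N + 1) + c (N + 1) * ∫ t in -(1 / 2 : ℝ)..1 / 2, |dirichlet N t| := by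
        rw [intervalIntegral.integral_add (hii (by fun_prop)) (hii (by fun_prop)),
          intervalIntegral.integral_const_mul, hP_integral]
    _ ≤ c 0 - c (N + 1) + c (N + 1) * (1 + log (2 * N + 1)) := by
        gcongr
        · exact hc0 _
        · exact integral_abs_dirichlet_le N
    _ = c 0 + c (N + 1) * log (2 * N + 1) := by ring

theorem stmt_10_general (a : ℕ → ℝ)
    (hpos : ∀ n, 0 < a n)
    (hconv : ∀ n, 0 ≤ a n - 2 * a (n + 1) + a (n + 2))
    (hdec : Antitone a)
    (hlog : ∃ M : ℝ, ∀ n : ℕ, |a n * Real.log n| ≤ M)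
    -- the `N`th symmetric Fourier partial sum of `f`, whose Fourier coefficients are `a_{|n|}`
    (S : ℕ → ℝ → ℝ)
    (hS : ∀ N t, S N t = a 0 + 2 * ∑ n ∈ Finset.Icc 1 N, a n * Real.cos (2 * Real.pi * n * t)) :
    ∃ B : ℝ, ∀ N : ℕ,
      (∫ t in Set.Icc (-(1/2) : ℝ) (1/2), |S N t|) ≤ B := by
  obtain ⟨M, hM⟩ := hlog
  refine ⟨a 0 + 2 * M, fun N => ?_⟩
  have hlog_le : log (2 * N + 1) ≤ 2 * log ((N + 1 : ℕ) : ℝ) :=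
    calc log (2 * N + 1) ≤ log (((N + 1 : ℕ) : ℝ) ^ 2) :=
          log_le_log (by positivity) (by push_cast; nlinarith)
      _ = 2 * log ((N + 1 : ℕ) : ℝ) := by rw [log_pow]; norm_num
  have htail : a (N + 1) * log (2 * N + 1) ≤ 2 * M :=
    calc a (N + 1) * log (2 * N + 1) ≤ 2 * (a (N + 1) * log ((N + 1 : ℕ) : ℝ)) := by
          nlinarith [mul_le_mul_of_nonneg_left hlog_le (hpos (N + 1)).le]
      _ ≤ 2 * M := by linarith [(le_abs_self _).trans (hM (N + 1))]
  have hS_eq : S N = cosineSum a N := funext (hS N)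
  rw [integral_Icc_eq_integral_Ioc, ← intervalIntegral.integral_of_le (by norm_num), hS_eq]
  linarith [integral_abs_cosineSum_le hconv hdec (fun n => (hpos n).le) N]

theorem stmt_10 (a : ℕ → ℝ)
    (hpos : ∀ n, 0 < a n)
    (hconv : ∀ n, 0 ≤ a n - 2 * a (n + 1) + a (n + 2))
    (hdec : Antitone a)
    (hlog : ∃ M : ℝ, ∀ n : ℕ, |a n * Real.log n| ≤ M)
    (f : ℝ → ℝ)
    (hf : ∀ t, f t = ∑' j : ℕ, (j + 1 : ℝ) * (a j - 2 * a (j + 1) + a (j + 2)) * fejer j t)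
    -- the `N`th symmetric Fourier partial sum of `f`, whose Fourier coefficients are `a_{|n|}`
    (S : ℕ → ℝ → ℝ)
    (hS : ∀ N t, S N t = a 0 + 2 * ∑ n ∈ Finset.Icc 1 N, a n * Real.cos (2 * Real.pi * n * t)) :
    ∃ B : ℝ, ∀ N : ℕ,
      (∫ t in Set.Icc (-(1/2) : ℝ) (1/2), |S N t|) ≤ B :=
  stmt_10_general a hpos hconv hdec hlog S hS
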